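/- arXiv:2404.19645 — 3 statements merged into one kernel-verified Lean document; each statement's English description precedes it below -/
import Mathlib

section
/- With f(t,s) = f̃(t)Θ(t−s) as above and F̃ a primitive of f̃, for every n ≥ 1 one has (Θ ★ f^{★n})(t,s) = (F̃(t) − F̃(s))ⁿ/n! · Θ(t−s), where Θ(t,s) := Θ(t−s) is viewed as a kernel. -/
/-!
Since `f(t,s) = f̃(t) Θ(t-s)`, one has `(f ★ h)(t,s) = f̃(t) (Θ ★ h)(t,s)`, so by induction
`f^{★(n+1)}(t,s) = f̃(t) (F̃(t) - F̃(s))ⁿ / n! · Θ(t-s)`. In `Θ ★ f^{★(n+1)}` the product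
`Θ(t-τ) Θ(τ-s)` is the indicator of `[s,t]`, and on that interval the integrand
`f̃(τ) (F̃(τ) - F̃(s))ⁿ / n!` is the derivative of `(F̃(τ) - F̃(s))ⁿ⁺¹ / (n+1)!`, which vanishes at `s`.
-/

open MeasureTheory Set

/-- Heaviside function: `Θ x = 1` if `x ≥ 0`, else `0`. -/
noncomputable def Heaviside (x : ℝ) : ℝ := if 0 ≤ x then 1 else 0

/-- The `★`-product of two kernels on `[a,b]²`. -/
noncomputable def starProd (a b : ℝ) (g h : ℝ → ℝ → ℂ) : ℝ → ℝ → ℂ :=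
  fun t s => ∫ τ in a..b, g t τ * h τ s

/-- `starPow a b f n` is the `(n+1)`-st `★`-power `f^{★(n+1)}`. -/
noncomputable def starPow (a b : ℝ) (f : ℝ → ℝ → ℂ) : ℕ → ℝ → ℝ → ℂ
  | 0 => f
  | n + 1 => starProd a b f (starPow a b f n)

/-- The Heaviside kernel `Θ(t,s) := Θ(t-s)`. -/
noncomputable def thetaK : ℝ → ℝ → ℂ := fun t s => (Heaviside (t - s) : ℝ)

lemma heaviside_mul_mul_heaviside_eq_indicator (g : ℝ → ℂ) (s t τ : ℝ) :
    (Heaviside (t - τ) : ℂ) * (g τ * (Heaviside (τ - s) : ℝ)) = (Icc s t).indicator g τ := by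
  by_cases hτt : τ ≤ t <;> by_cases hsτ : s ≤ τ <;>
    simp [Heaviside, indicator, sub_nonneg, hτt, hsτ]

section

variable {E : Type*} [NormedAddCommGroup E] [NormedSpace ℝ E] {a b s t : ℝ}

theorem intervalIntegral_indicator_Icc (g : ℝ → E) (hs : s ∈ Icc a b) (ht : t ∈ Icc a b) :
    ∫ x in a..b, (Icc s t).indicator g x = Heaviside (t - s) • ∫ x in s..t, g x := by
  rcases le_or_gt s t with hst | hts
  · have hab : a ≤ b := hs.1.trans (hst.trans ht.2)
    have hinter : Ioc s t ∩ Ioc a b = Ioc s t :=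
      inter_eq_left.2 (Ioc_subset_Ioc hs.1 ht.2)
    rw [Heaviside, if_pos (sub_nonneg.2 hst), one_smul, intervalIntegral.integral_of_le hab,
      intervalIntegral.integral_of_le hst, integral_indicator measurableSet_Icc,
      Measure.restrict_restrict measurableSet_Icc]
    refine setIntegral_congr_set ?_
    simpa [hinter] using (Ioc_ae_eq_Icc (μ := volume) (a := s) (b := t)).symm.inter
      (Filter.EventuallyEq.refl _ (Ioc a b))
  · rw [Icc_eq_empty_of_lt hts, indicator_empty, Heaviside, if_neg (by linarith), zero_smul]
    exact intervalIntegral.integral_zero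

variable [CompleteSpace E]

theorem intervalIntegral_eq_sub_of_hasDerivWithinAt_Icc {F f : ℝ → E}
    (hF : ∀ x ∈ Icc a b, HasDerivWithinAt F (f x) (Icc a b) x) (hf : ContinuousOn f (Icc a b))
    (hs : s ∈ Icc a b) (ht : t ∈ Icc a b) :
    ∫ x in s..t, f x = F t - F s := by
  have hsub : uIcc s t ⊆ Icc a b := uIcc_subset_Icc hs ht
  refine intervalIntegral.integral_eq_sub_of_hasDeriv_right
    (fun x hx => (hF x (hsub hx)).continuousWithinAt.mono hsub) (fun x hx => ?_)
    ((hf.mono hsub).intervalIntegrable)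
  have hx' : x ∈ Ioo a b :=
    Ioo_subset_Ioo (le_min hs.1 ht.1) (max_le hs.2 ht.2) hx
  exact ((hF x (Ioo_subset_Icc_self hx')).hasDerivAt (Icc_mem_nhds hx'.1 hx'.2)).hasDerivWithinAt

end

theorem HasDerivWithinAt.sub_const_pow_succ_div_factorial {𝕜 𝔸 : Type*}
    [NontriviallyNormedField 𝕜] [NormedField 𝔸] [NormedAlgebra 𝕜 𝔸] [CharZero 𝔸]
    {F : 𝕜 → 𝔸} {f : 𝔸} {S : Set 𝕜} {x : 𝕜} (hF : HasDerivWithinAt F f S x) (c : 𝔸) (n : ℕ) :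
    HasDerivWithinAt (fun y => (F y - c) ^ (n + 1) / ((n + 1).factorial : 𝔸))
      (f * ((F x - c) ^ n / (n.factorial : 𝔸))) S x := by
  convert ((hF.sub_const c).fun_pow (n + 1)).div_const ((n + 1).factorial : 𝔸) using 1
  rw [Nat.factorial_succ, Nat.cast_mul, Nat.add_sub_cancel]
  field_simp

section

variable {a b : ℝ} {ft Ft : ℝ → ℂ}

theorem starProd_thetaK_eq (hcont : ContinuousOn ft (Icc a b))
    (hprim : ∀ t ∈ Icc a b, HasDerivWithinAt Ft (ft t) (Icc a b) t)
    {h : ℝ → ℝ → ℂ} {n : ℕ} {t s : ℝ} (ht : t ∈ Icc a b) (hs : s ∈ Icc a b)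
    (hh : ∀ τ ∈ Icc a b,
      h τ s = ft τ * ((Ft τ - Ft s) ^ n / (n.factorial : ℂ)) * (Heaviside (τ - s) : ℝ)) :
    starProd a b thetaK h t s
      = (Ft t - Ft s) ^ (n + 1) / ((n + 1).factorial : ℂ) * (Heaviside (t - s) : ℝ) := by
  set g : ℝ → ℂ := fun τ => ft τ * ((Ft τ - Ft s) ^ n / (n.factorial : ℂ))
  have hab : a ≤ b := ht.1.trans ht.2
  have hFt : ContinuousOn Ft (Icc a b) := fun x hx => (hprim x hx).continuousWithinAt
  have hg : ContinuousOn g (Icc a b) :=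
    hcont.mul (((hFt.sub continuousOn_const).pow n).div_const _)
  calc starProd a b thetaK h t s = ∫ τ in a..b, (Icc s t).indicator g τ := by
        refine intervalIntegral.integral_congr fun τ hτ => ?_
        rw [uIcc_of_le hab] at hτ
        simp only [thetaK, hh τ hτ]
        exact heaviside_mul_mul_heaviside_eq_indicator g s t τ
    _ = Heaviside (t - s) • ∫ τ in s..t, g τ := intervalIntegral_indicator_Icc g hs ht
    _ = Heaviside (t - s) • ((Ft t - Ft s) ^ (n + 1) / ((n + 1).factorial : ℂ)
          - (Ft s - Ft s) ^ (n + 1) / ((n + 1).factorial : ℂ)) := by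
        rw [intervalIntegral_eq_sub_of_hasDerivWithinAt_Icc
          (fun x hx => (hprim x hx).sub_const_pow_succ_div_factorial (Ft s) n) hg hs ht]
    _ = _ := by simp [Complex.real_smul, mul_comm]

theorem starPow_eq (hcont : ContinuousOn ft (Icc a b))
    (hprim : ∀ t ∈ Icc a b, HasDerivWithinAt Ft (ft t) (Icc a b) t)
    {f : ℝ → ℝ → ℂ} (hf : ∀ t s, f t s = ft t * (Heaviside (t - s) : ℝ)) (n : ℕ) :
    ∀ t ∈ Icc a b, ∀ s ∈ Icc a b, starPow a b f n t s
      = ft t * ((Ft t - Ft s) ^ n / (n.factorial : ℂ)) * (Heaviside (t - s) : ℝ) := by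
  induction n with
  | zero => intro t _ s _; simp [starPow, hf]
  | succ n ih =>
    intro t ht s hs
    have hfactor : starProd a b f (starPow a b f n) t s
        = ft t * starProd a b thetaK (starPow a b f n) t s := by
      simp only [starProd, thetaK, hf, mul_assoc, intervalIntegral.integral_const_mul]
    rw [starPow, hfactor, starProd_thetaK_eq hcont hprim ht hs fun τ hτ => ih τ hτ s hs]
    ring

end

theorem theta_starPow_eq_general (a b : ℝ) (ft Ft : ℝ → ℂ)
    (hcont : ContinuousOn ft (Icc a b))
    (hprim : ∀ t ∈ Icc a b, HasDerivWithinAt Ft (ft t) (Icc a b) t)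
    (f : ℝ → ℝ → ℂ) (hf : ∀ t s, f t s = ft t * (Heaviside (t - s) : ℝ)) :
    ∀ n : ℕ, ∀ t ∈ Icc a b, ∀ s ∈ Icc a b,
      starProd a b thetaK (starPow a b f n) t s
        = (Ft t - Ft s) ^ (n + 1) / (Nat.factorial (n + 1) : ℂ)
            * (Heaviside (t - s) : ℝ) := by
  intro n t ht s hs
  exact starProd_thetaK_eq hcont hprim ht hs fun τ hτ => starPow_eq hcont hprim hf n τ hτ s hs

/-- With `f(t,s) = f̃(t)Θ(t-s)` and `F̃` a primitive of `f̃`, for every `n ≥ 1`,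
`(Θ ★ f^{★n})(t,s) = (F̃(t) - F̃(s))^n / n! · Θ(t-s)`
(here `starPow a b f n = f^{★(n+1)}`). -/
theorem theta_starPow_eq (a b : ℝ) (hab : a ≤ b) (ft Ft : ℝ → ℂ)
    (hcont : ContinuousOn ft (Icc a b))
    (hprim : ∀ t ∈ Icc a b, HasDerivWithinAt Ft (ft t) (Icc a b) t)
    (f : ℝ → ℝ → ℂ) (hf : ∀ t s, f t s = ft t * (Heaviside (t - s) : ℝ)) :
    ∀ n : ℕ, ∀ t ∈ Icc a b, ∀ s ∈ Icc a b,
      starProd a b thetaK (starPow a b f n) t s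
        = (Ft t - Ft s) ^ (n + 1) / (Nat.factorial (n + 1) : ℂ)
            * (Heaviside (t - s) : ℝ) :=
  theta_starPow_eq_general a b ft Ft hcont hprim f hf
end

section
/- Let λ̃ : [a,b] → ℝ be continuous with primitive L(τ,s) = ∫ₛᵗ λ̃ (i.e., L(τ,s) = ∫ₛ^τ λ̃(σ)dσ), λ(t,s) = λ̃(t)Θ(t−s). Then for any scalars α_0,…,α_n and s ∈ [a,b), ‖R^★(λ) − ∑_{k=0}^n α_k λ^{★k}‖_★(s)² = ∫ₛᵇ |exp(L(τ,s)) − ∑_{k=0}^n α_k L(τ,s)^k/k!|² dτ, where the ★-norm of a scalar kernel f is ‖f‖_★(s)² = ∫ₛᵇ |F̃(τ,s)|²dτ with Θ★f = F̃Θ. -/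
open MeasureTheory Set

/-- The kernel `λ(t,s) = λ̃(t)Θ(t-s)` of an eigencurve. -/
noncomputable def lamKernel (lam : ℝ → ℝ) : ℝ → ℝ → ℂ :=
  fun t s => (lam t : ℂ) * (Heaviside (t - s) : ℝ)

/-- `Θ ★ R^★(λ)`, with `R^★(λ) = ∑_{k≥0} λ^{★k}` (the `k = 0` term `δ` contributes
`Θ ★ δ = Θ`); here `starPow _ _ _ k = λ^{★(k+1)}`. -/
noncomputable def thetaResolvent (a b : ℝ) (lam : ℝ → ℝ) : ℝ → ℝ → ℂ :=
  fun t s => (Heaviside (t - s) : ℝ)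
    + ∑' k : ℕ, starProd a b thetaK (starPow a b (lamKernel lam) k) t s

/-- `Θ ★ p^★(λ)` for the `★`-polynomial `p^★(x) = ∑_{k=0}^n α_k x^{★k}`. -/
noncomputable def thetaStarPoly (a b : ℝ) (lam : ℝ → ℝ) (α : ℕ → ℂ) (n : ℕ) :
    ℝ → ℝ → ℂ :=
  fun t s => α 0 * (Heaviside (t - s) : ℝ)
    + ∑ k ∈ Finset.range n, α (k + 1) * starProd a b thetaK (starPow a b (lamKernel lam) k) t s

/-! Every kernel involved has the Volterra form `g(t) Θ(t - s)`, and left `★`-multiplication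
by such a kernel integrates along `[s, t]`. By induction and the fundamental theorem of calculus,
`Θ ★ λ^{★k} = Θ · L^k / k!` with `L(t, s) = ∫ₛᵗ λ̃`; summing the exponential series gives
`Θ ★ R^★(λ) = Θ · exp L`. For `τ ≥ s` the two integrands therefore agree pointwise. -/

lemma heaviside_sub_mul_heaviside_sub (s τ t : ℝ) :
    Heaviside (t - τ) * Heaviside (τ - s) = (Icc s t).indicator 1 τ := by
  by_cases h : τ ∈ Icc s t
  · simp [Heaviside, h, h.1, h.2]
  · rw [mem_Icc, not_and_or, not_le, not_le] at h
    rcases h with h | h <;> simp [Heaviside, indicator, h.not_ge, sub_nonneg]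

lemma integral_heaviside_mul_heaviside_mul {a b s t : ℝ} (hs : s ∈ Icc a b) (ht : t ∈ Icc a b)
    (h : ℝ → ℂ) :
    ∫ τ in a..b, (Heaviside (t - τ) : ℂ) * Heaviside (τ - s) * h τ
      = Heaviside (t - s) * ∫ τ in s..t, h τ := by
  have hind : ∀ τ, (Heaviside (t - τ) : ℂ) * Heaviside (τ - s) * h τ = (Icc s t).indicator h τ := by
    intro τ
    rw [← Complex.ofReal_mul, heaviside_sub_mul_heaviside_sub]
    by_cases hτ : τ ∈ Icc s t <;> simp [hτ]
  simp only [hind]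
  by_cases hst : s ≤ t
  · have hsub : Icc s t ⊆ Icc a b := Icc_subset_Icc hs.1 ht.2
    rw [intervalIntegral.integral_of_le (hs.1.trans hs.2), ← integral_Icc_eq_integral_Ioc,
      setIntegral_indicator measurableSet_Icc, inter_eq_right.2 hsub,
      intervalIntegral.integral_of_le hst, ← integral_Icc_eq_integral_Ioc]
    simp [Heaviside, hst]
  · simp [Heaviside, sub_nonneg, hst]

lemma starProd_apply_of_heaviside {a b s t : ℝ} (hs : s ∈ Icc a b) (ht : t ∈ Icc a b)
    {G K : ℝ → ℝ → ℂ} {c : ℂ} {h : ℝ → ℂ} (hG : ∀ τ, G t τ = c * Heaviside (t - τ))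
    (hK : ∀ τ ∈ Icc a b, K τ s = Heaviside (τ - s) * h τ) :
    starProd a b G K t s = Heaviside (t - s) * (c * ∫ τ in s..t, h τ) := by
  have hcongr : EqOn (fun τ => G t τ * K τ s)
      (fun τ => c * ((Heaviside (t - τ) : ℂ) * Heaviside (τ - s) * h τ)) (uIcc a b) := by
    intro τ hτ
    rw [uIcc_of_le (hs.1.trans hs.2)] at hτ
    simp only [hG, hK τ hτ]
    ring
  rw [starProd, intervalIntegral.integral_congr hcongr, intervalIntegral.integral_const_mul,
    integral_heaviside_mul_heaviside_mul hs ht]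
  ring

lemma integral_mul_primitive_pow_div_factorial {f : ℝ → ℝ} (hf : Continuous f) (s t : ℝ) (k : ℕ) :
    ∫ τ in s..t, (f τ : ℂ) * ((∫ σ in s..τ, f σ : ℝ) : ℂ) ^ k / k.factorial
      = ((∫ σ in s..t, f σ : ℝ) : ℂ) ^ (k + 1) / (k + 1).factorial := by
  set L : ℝ → ℂ := fun u => ((∫ σ in s..u, f σ : ℝ) : ℂ)
  have hL : ∀ τ, HasDerivAt L (f τ : ℂ) τ := fun τ =>
    (hf.integral_hasStrictDerivAt s τ).hasDerivAt.ofReal_comp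
  have hLpow : ∀ τ, HasDerivAt (fun u => L u ^ (k + 1) / (k + 1).factorial)
      ((f τ : ℂ) * L τ ^ k / k.factorial) τ := by
    intro τ
    refine (((hL τ).pow (k + 1)).div_const ((k + 1).factorial : ℂ)).congr_deriv ?_
    rw [Nat.factorial_succ]
    push_cast
    field_simp
  have hcont : Continuous fun τ => (f τ : ℂ) * L τ ^ k / k.factorial :=
    (Complex.continuous_ofReal.comp hf).mul
      ((continuous_iff_continuousAt.2 fun τ => (hL τ).continuousAt).pow k) |>.div_const _
  rw [intervalIntegral.integral_eq_sub_of_hasDerivAt (fun τ _ => hLpow τ)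
    (hcont.intervalIntegrable _ _)]
  simp [L]

lemma integral_mul_primitive_pow_div_factorial_of_continuousOn {a b s t : ℝ} {f : ℝ → ℝ}
    (hf : ContinuousOn f (Icc a b)) (hs : s ∈ Icc a b) (ht : t ∈ Icc a b) (k : ℕ) :
    ∫ τ in s..t, (f τ : ℂ) * ((∫ σ in s..τ, f σ : ℝ) : ℂ) ^ k / k.factorial
      = ((∫ σ in s..t, f σ : ℝ) : ℂ) ^ (k + 1) / (k + 1).factorial := by
  set g := IccExtend (hs.1.trans hs.2) ((Icc a b).domRestrict f)
  have hg : Continuous g := continuous_IccExtend_iff.2 hf.domRestrict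
  have hfg : EqOn f g (Icc a b) := fun τ hτ => by simp [g, IccExtend_of_mem _ _ hτ]
  have hprim : ∀ τ ∈ Icc a b, ∫ σ in s..τ, f σ = ∫ σ in s..τ, g σ := fun τ hτ =>
    intervalIntegral.integral_congr (hfg.mono (uIcc_subset_Icc hs hτ))
  have hst : uIcc s t ⊆ Icc a b := uIcc_subset_Icc hs ht
  rw [hprim t ht, ← integral_mul_primitive_pow_div_factorial hg s t k]
  refine intervalIntegral.integral_congr fun τ hτ => ?_
  simp only [hfg (hst hτ), hprim τ (hst hτ)]

lemma starPow_lamKernel_apply {a b s t : ℝ} {lam : ℝ → ℝ} (hlam : ContinuousOn lam (Icc a b))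
    (hs : s ∈ Icc a b) (k : ℕ) (ht : t ∈ Icc a b) :
    starPow a b (lamKernel lam) k t s
      = Heaviside (t - s) * ((lam t : ℂ) * ((∫ σ in s..t, lam σ : ℝ) : ℂ) ^ k / k.factorial) := by
  induction k generalizing t with
  | zero => simp [starPow, lamKernel, mul_comm]
  | succ k ih =>
    rw [starPow, starProd_apply_of_heaviside hs ht (fun τ => rfl) fun τ hτ => ih hτ,
      integral_mul_primitive_pow_div_factorial_of_continuousOn hlam hs ht, mul_div_assoc]

lemma starProd_thetaK_starPow_lamKernel_apply {a b s t : ℝ} {lam : ℝ → ℝ}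
    (hlam : ContinuousOn lam (Icc a b)) (hs : s ∈ Icc a b) (k : ℕ) (ht : t ∈ Icc a b) :
    starProd a b thetaK (starPow a b (lamKernel lam) k) t s
      = Heaviside (t - s) * (((∫ σ in s..t, lam σ : ℝ) : ℂ) ^ (k + 1) / (k + 1).factorial) := by
  rw [starProd_apply_of_heaviside hs ht (c := 1) (fun τ => (one_mul _).symm)
    fun τ hτ => starPow_lamKernel_apply hlam hs k hτ,
    integral_mul_primitive_pow_div_factorial_of_continuousOn hlam hs ht, one_mul]

lemma tsum_pow_succ_div_factorial (z : ℂ) :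
    ∑' k : ℕ, z ^ (k + 1) / (k + 1).factorial = Complex.exp z - 1 := by
  have hexp := (hasSum_nat_add_iff' 1).2 (NormedSpace.expSeries_div_hasSum_exp z)
  rw [← Complex.exp_eq_exp_ℂ] at hexp
  simpa using hexp.tsum_eq

lemma thetaResolvent_apply {a b s t : ℝ} {lam : ℝ → ℝ} (hlam : ContinuousOn lam (Icc a b))
    (hs : s ∈ Icc a b) (ht : t ∈ Icc a b) :
    thetaResolvent a b lam t s
      = Heaviside (t - s) * Complex.exp ((∫ σ in s..t, lam σ : ℝ) : ℂ) := by
  simp only [thetaResolvent, starProd_thetaK_starPow_lamKernel_apply hlam hs _ ht, tsum_mul_left,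
    tsum_pow_succ_div_factorial]
  ring

lemma thetaStarPoly_apply {a b s t : ℝ} {lam : ℝ → ℝ} (hlam : ContinuousOn lam (Icc a b))
    (hs : s ∈ Icc a b) (ht : t ∈ Icc a b) (α : ℕ → ℂ) (n : ℕ) :
    thetaStarPoly a b lam α n t s = Heaviside (t - s) *
      ∑ k ∈ Finset.range (n + 1), α k * ((∫ σ in s..t, lam σ : ℝ) : ℂ) ^ k / k.factorial := by
  simp only [thetaStarPoly, starProd_thetaK_starPow_lamKernel_apply hlam hs _ ht]
  rw [Finset.sum_range_succ', mul_add, Finset.mul_sum, add_comm]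
  congr 1
  · exact Finset.sum_congr rfl fun k _ => by ring
  · simp [mul_comm]

theorem starNorm_resolvent_error_eq_exp_poly_error_general (a b : ℝ)
    (lam : ℝ → ℝ) (hlam : ContinuousOn lam (Icc a b))
    (α : ℕ → ℂ) (n : ℕ) :
    ∀ s ∈ Ico a b,
      (∫ τ in s..b, norm
          (thetaResolvent a b lam τ s - thetaStarPoly a b lam α n τ s) ^ 2)
        = ∫ τ in s..b, norm
            ((Real.exp (∫ σ in s..τ, lam σ) : ℂ)
              - ∑ k ∈ Finset.range (n + 1),
                  α k * ((∫ σ in s..τ, lam σ : ℝ) : ℂ) ^ k / (Nat.factorial k : ℂ)) ^ 2 := by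
  intro s hs
  have hs' : s ∈ Icc a b := Ico_subset_Icc_self hs
  refine intervalIntegral.integral_congr fun τ hτ => ?_
  rw [uIcc_of_le hs.2.le] at hτ
  have hτ' : τ ∈ Icc a b := ⟨hs.1.trans hτ.1, hτ.2⟩
  have hθ : Heaviside (τ - s) = 1 := if_pos (sub_nonneg.2 hτ.1)
  simp only [thetaResolvent_apply hlam hs' hτ', thetaStarPoly_apply hlam hs' hτ', hθ,
    Complex.ofReal_one, one_mul, Complex.ofReal_exp]

/-- Key identity in the proof of Theorem 2.1: the `★`-norm of the `★`-polynomial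
approximation error of the `★`-resolvent `R^★(λ)` equals the `L²` error of the
ordinary polynomial `p(t) = ∑ (α_k/k!) t^k` approximating the exponential along the
eigencurve primitive `L(τ,s) = ∫_s^τ λ̃`:
`‖R^★(λ) - ∑_{k=0}^n α_k λ^{★k}‖_★(s)² = ∫_s^b |exp(L(τ,s)) - ∑ α_k L(τ,s)^k/k!|² dτ`. -/
theorem starNorm_resolvent_error_eq_exp_poly_error (a b : ℝ) (hab : a ≤ b)
    (lam : ℝ → ℝ) (hlam : ContinuousOn lam (Icc a b))
    (α : ℕ → ℂ) (n : ℕ) :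
    ∀ s ∈ Ico a b,
      (∫ τ in s..b, norm
          (thetaResolvent a b lam τ s - thetaStarPoly a b lam α n τ s) ^ 2)
        = ∫ τ in s..b, norm
            ((Real.exp (∫ σ in s..τ, lam σ) : ℂ)
              - ∑ k ∈ Finset.range (n + 1),
                  α k * ((∫ σ in s..τ, lam σ : ℝ) : ℂ) ^ k / (Nat.factorial k : ℂ)) ^ 2 :=
  starNorm_resolvent_error_eq_exp_poly_error_general a b lam hlam α n
end

section
/- Let λ̃ : [a,b] → ℝ be continuous, L(τ,s) = ∫ₛ^τ λ̃, and let 𝒥 ⊂ ℝ be a compact interval containing L(τ,s) for all s ≤ τ in [a,b]. Let E_n(𝒥) = min over real polynomials p of degree ≤ n of max_{x∈𝒥}|eˣ − p(x)|. Then there exists a ★-polynomial p^★ of degree ≤ n with ‖R^★(λ) − p^★(λ)‖_★(s) ≤ E_n(𝒥)·√(b−s) for every s ∈ [a,b). -/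
open MeasureTheory Set

/-- `E_n(J)`: the minimal uniform error of polynomial approximation (degree `≤ n`)
of the exponential on `J`. -/
noncomputable def En (n : ℕ) (J : Set ℝ) : ℝ :=
  sInf {r | ∃ p : Polynomial ℝ, p.natDegree ≤ n ∧
    r = sSup ((fun x => |Real.exp x - Polynomial.eval x p|) '' J)}

/-! On the triangle `s ≤ t` all `★`-powers are explicit: with `L(t,s) = ∫ₛᵗ λ̃` and `∂ₜL = λ̃`,
the fundamental theorem of calculus gives `λ^{★(k+1)}(t,s) = λ̃(t) L(t,s)ᵏ / k!` and
`(Θ ★ λ^{★k})(t,s) = L(t,s)ᵏ / k!`. Hence `Θ ★ R^★(λ) = e^L` and, for `α_k = k! β_k`,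
`Θ ★ p^★(λ) = q(L)` with `q = ∑ β_k xᵏ`, so the integrand of the `★`-norm is
`|e^L - q(L)|² ≤ E_n(J)²` once `q` is a best uniform approximation of `exp` on `J`; such a `q`
exists because a finite-dimensional subspace of `C(J, ℝ)` contains a nearest point to `exp`. -/

open Polynomial Nat

theorem Submodule.exists_norm_sub_le_of_finiteDimensional {E : Type*} [NormedAddCommGroup E]
    [NormedSpace ℝ E] (K : Submodule ℝ E) [FiniteDimensional ℝ K] (x : E) :
    ∃ y ∈ K, ∀ z ∈ K, ‖x - y‖ ≤ ‖x - z‖ := by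
  have hbdd : Bornology.IsBounded {y : K | ‖x - y‖ ≤ ‖x - (0 : K)‖} := by
    refine (Metric.isBounded_closedBall (x := (0 : K)) (r := 2 * ‖x‖)).subset fun y hy => ?_
    rw [mem_closedBall_zero_iff]
    simp only [mem_ofPred_eq, ZeroMemClass.coe_zero, sub_zero] at hy
    calc ‖y‖ = ‖(y : E)‖ := rfl
      _ ≤ ‖x‖ + ‖x - y‖ := norm_le_insert x (y : E)
      _ ≤ 2 * ‖x‖ := by linarith
  obtain ⟨y, hy⟩ := (continuous_const.sub continuous_subtype_val).norm.exists_forall_le_of_isBounded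
    (0 : K) hbdd
  exact ⟨y, y.2, fun z hz => hy ⟨z, hz⟩⟩

instance Polynomial.finiteDimensional_degreeLE (n : ℕ) : FiniteDimensional ℝ (degreeLE ℝ n) :=
  degreeLT_succ_eq_degreeLE (R := ℝ) ▸ (degreeLTEquiv ℝ (n + 1)).symm.finiteDimensional

theorem exists_polynomial_forall_sSup_abs_sub_eval_le {J : Set ℝ} (hJ : IsCompact J) {f : ℝ → ℝ}
    (hf : ContinuousOn f J) (n : ℕ) :
    ∃ q : ℝ[X], q.natDegree ≤ n ∧ ∀ p : ℝ[X], p.natDegree ≤ n →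
      sSup ((fun x => |f x - q.eval x|) '' J) ≤ sSup ((fun x => |f x - p.eval x|) '' J) := by
  have : CompactSpace J := isCompact_iff_compactSpace.1 hJ
  let F : C(J, ℝ) := ⟨J.domRestrict f, hf.domRestrict⟩
  have hsSup (p : ℝ[X]) :
      sSup ((fun x => |f x - p.eval x|) '' J) = ‖F - p.toContinuousMapOn J‖ := by
    rw [sSup_image', ContinuousMap.norm_eq_iSup_norm]
    rfl
  obtain ⟨_, ⟨q, hq, rfl⟩, hmin⟩ := ((degreeLE ℝ n).map
    (toContinuousMapOnAlgHom J).toLinearMap).exists_norm_sub_le_of_finiteDimensional F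
  refine ⟨q, natDegree_le_iff_degree_le.2 (mem_degreeLE.1 hq), fun p hp => ?_⟩
  rw [hsSup, hsSup]
  exact hmin _ ⟨p, mem_degreeLE.2 (natDegree_le_iff_degree_le.1 hp), rfl⟩

theorem exists_polynomial_abs_exp_sub_eval_le_En (n : ℕ) {J : Set ℝ} (hJ : IsCompact J) :
    ∃ q : ℝ[X], q.natDegree ≤ n ∧ ∀ x ∈ J, |Real.exp x - q.eval x| ≤ En n J := by
  obtain ⟨q, hq, hmin⟩ :=
    exists_polynomial_forall_sSup_abs_sub_eval_le hJ Real.continuous_exp.continuousOn n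
  have hbdd : BddAbove ((fun x => |Real.exp x - q.eval x|) '' J) :=
    (hJ.image_of_continuousOn (by fun_prop)).bddAbove
  refine ⟨q, hq, fun x hx => (le_csSup hbdd (mem_image_of_mem _ hx)).trans
    (le_csInf ⟨_, 0, natDegree_zero.trans_le n.zero_le, rfl⟩ ?_)⟩
  rintro r ⟨p, hp, rfl⟩
  exact hmin p hp

theorem heaviside_of_nonneg {x : ℝ} (h : 0 ≤ x) : Heaviside x = 1 := if_pos h

theorem heaviside_of_neg {x : ℝ} (h : x < 0) : Heaviside x = 0 := if_neg (not_le.2 h)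

theorem integral_heaviside_mul_mul_heaviside {a b s t : ℝ} (hs : a ≤ s) (ht : t ≤ b)
    (f : ℝ → ℝ) :
    ∫ τ in a..b, Heaviside (t - τ) * f τ * Heaviside (τ - s)
      = Heaviside (t - s) * ∫ τ in s..t, f τ := by
  rcases lt_or_ge t s with hts | hst
  · rw [heaviside_of_neg (sub_neg.2 hts), zero_mul]
    refine intervalIntegral.integral_zero_ae (ae_of_all _ fun τ _ => ?_)
    rcases le_or_gt τ t with hτ | hτ
    · rw [heaviside_of_neg (by linarith : τ - s < 0), mul_zero]
    · rw [heaviside_of_neg (by linarith : t - τ < 0), zero_mul, zero_mul]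
  have hind : (fun τ => Heaviside (t - τ) * f τ * Heaviside (τ - s)) = (Icc s t).indicator f := by
    ext τ
    by_cases hτ : τ ∈ Icc s t
    · rw [indicator_of_mem hτ, heaviside_of_nonneg (sub_nonneg.2 hτ.2),
        heaviside_of_nonneg (sub_nonneg.2 hτ.1), one_mul, mul_one]
    · rw [indicator_of_notMem hτ]
      rcases not_and_or.1 hτ with hτ | hτ
      · rw [heaviside_of_neg (sub_neg.2 (not_le.1 hτ)), mul_zero]
      · rw [heaviside_of_neg (sub_neg.2 (not_le.1 hτ)), zero_mul, zero_mul]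
  have hset : (Ioc a b ∩ Icc s t : Set ℝ) =ᵐ[volume] Icc s t :=
    (inter_subset_right.eventuallyLE).antisymm (Ioc_ae_eq_Icc.symm.le.trans
      (subset_inter (Ioc_subset_Ioc hs ht) Ioc_subset_Icc_self).eventuallyLE)
  rw [hind, intervalIntegral.integral_of_le (hs.trans (hst.trans ht)),
    setIntegral_indicator measurableSet_Icc, setIntegral_congr_set hset,
    integral_Icc_eq_integral_Ioc, ← intervalIntegral.integral_of_le hst,
    heaviside_of_nonneg (sub_nonneg.2 hst), one_mul]

theorem integral_mul_integral_pow {lam : ℝ → ℝ} {s t : ℝ} (hlam : ContinuousOn lam (uIcc s t))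
    (k : ℕ) :
    ∫ τ in s..t, lam τ * (∫ σ in s..τ, lam σ) ^ k = (∫ σ in s..t, lam σ) ^ (k + 1) / (k + 1) := by
  have hprim : ContinuousOn (fun x => ∫ σ in s..x, lam σ) (uIcc s t) :=
    intervalIntegral.continuousOn_primitive_interval (hlam.integrableOn_compact isCompact_uIcc)
  have hderiv : ∀ x ∈ Ioo (min s t) (max s t),
      HasDerivAt (fun x => ∫ σ in s..x, lam σ) (lam x) x := by
    intro x hx
    have hlam' : ContinuousOn lam (Ioo (min s t) (max s t)) := hlam.mono Ioo_subset_Icc_self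
    exact intervalIntegral.integral_hasDerivAt_right
      ((hlam.mono (uIcc_subset_uIcc_left (Ioo_subset_Icc_self hx))).intervalIntegrable)
      (hlam'.stronglyMeasurableAtFilter isOpen_Ioo x hx)
      (hlam'.continuousAt (isOpen_Ioo.mem_nhds hx))
  rw [intervalIntegral.integral_eq_sub_of_hasDeriv_right
    (f := fun x => (∫ σ in s..x, lam σ) ^ (k + 1) / (k + 1))
    (f' := fun τ => lam τ * (∫ σ in s..τ, lam σ) ^ k)
    ((hprim.pow _).div_const _) (fun x hx => ?_) ((hlam.mul (hprim.pow k)).intervalIntegrable)]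
  · simp
  · refine (((hderiv x hx).pow (k + 1)).div_const _).hasDerivWithinAt.congr_deriv ?_
    push_cast
    field_simp

section Kernels

variable {lam : ℝ → ℝ} {a b s t : ℝ}

theorem integral_heaviside_mul_pow_mul_heaviside (hlam : ContinuousOn lam (Icc a b))
    (hs : s ∈ Icc a b) (ht : t ∈ Icc a b) (k : ℕ) :
    ∫ τ in a..b, Heaviside (t - τ) * (lam τ * (∫ σ in s..τ, lam σ) ^ k / k ! * Heaviside (τ - s))
      = (∫ σ in s..t, lam σ) ^ (k + 1) / (k + 1) ! * Heaviside (t - s) := by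
  simp only [← mul_assoc]
  rw [integral_heaviside_mul_mul_heaviside hs.1 ht.2, intervalIntegral.integral_div,
    integral_mul_integral_pow (hlam.mono (uIcc_subset_Icc hs ht)), factorial_succ]
  push_cast
  field_simp

theorem starPow_lamKernel_eq (hlam : ContinuousOn lam (Icc a b)) (hs : s ∈ Icc a b)
    (ht : t ∈ Icc a b) (k : ℕ) :
    starPow a b (lamKernel lam) k t s
      = ((lam t * (∫ σ in s..t, lam σ) ^ k / k ! * Heaviside (t - s) : ℝ) : ℂ) := by
  induction k generalizing t with
  | zero => simp [starPow, lamKernel]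
  | succ k ih =>
    calc starPow a b (lamKernel lam) (k + 1) t s
        = ∫ τ in a..b, ((lam t * (Heaviside (t - τ) *
            (lam τ * (∫ σ in s..τ, lam σ) ^ k / k ! * Heaviside (τ - s))) : ℝ) : ℂ) := by
          refine intervalIntegral.integral_congr fun τ hτ => ?_
          rw [uIcc_of_le (hs.1.trans hs.2)] at hτ
          simp only [lamKernel, ih hτ]
          push_cast
          ring
      _ = _ := by
          rw [intervalIntegral.integral_ofReal, intervalIntegral.integral_const_mul,
            integral_heaviside_mul_pow_mul_heaviside hlam hs ht]
          push_cast
          ring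

theorem starProd_thetaK_starPow_lamKernel_eq (hlam : ContinuousOn lam (Icc a b))
    (hs : s ∈ Icc a b) (ht : t ∈ Icc a b) (k : ℕ) :
    starProd a b thetaK (starPow a b (lamKernel lam) k) t s
      = (((∫ σ in s..t, lam σ) ^ (k + 1) / (k + 1) ! * Heaviside (t - s) : ℝ) : ℂ) := by
  rw [← integral_heaviside_mul_pow_mul_heaviside hlam hs ht, ← intervalIntegral.integral_ofReal]
  refine intervalIntegral.integral_congr fun τ hτ => ?_
  rw [uIcc_of_le (hs.1.trans hs.2)] at hτ
  simp only [thetaK, starPow_lamKernel_eq hlam hs hτ k]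
  push_cast
  ring

theorem Real.hasSum_pow_succ_div_factorial (x : ℝ) :
    HasSum (fun k : ℕ => x ^ (k + 1) / (k + 1) !) (Real.exp x - 1) := by
  have := (hasSum_nat_add_iff' 1).2 (NormedSpace.expSeries_div_hasSum_exp x)
  simpa [← Real.exp_eq_exp_ℝ] using this

theorem thetaResolvent_eq (hlam : ContinuousOn lam (Icc a b)) (hs : s ∈ Icc a b)
    (ht : t ∈ Icc a b) :
    thetaResolvent a b lam t s = ((Real.exp (∫ σ in s..t, lam σ) * Heaviside (t - s) : ℝ) : ℂ) := by
  simp only [thetaResolvent, starProd_thetaK_starPow_lamKernel_eq hlam hs ht, ← Complex.ofReal_tsum,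
    ((Real.hasSum_pow_succ_div_factorial _).mul_right _).tsum_eq]
  push_cast
  ring

theorem thetaStarPoly_eq {q : ℝ[X]} {n : ℕ} (hq : q.natDegree ≤ n)
    (hlam : ContinuousOn lam (Icc a b)) (hs : s ∈ Icc a b) (ht : t ∈ Icc a b) :
    thetaStarPoly a b lam (fun k => (k ! : ℂ) * q.coeff k) n t s
      = ((q.eval (∫ σ in s..t, lam σ) * Heaviside (t - s) : ℝ) : ℂ) := by
  simp only [thetaStarPoly, starProd_thetaK_starPow_lamKernel_eq hlam hs ht,
    eval_eq_sum_range' (lt_succ_of_le hq), Finset.sum_range_succ']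
  push_cast
  rw [add_mul, Finset.sum_mul, add_comm]
  congr 1
  · refine Finset.sum_congr rfl fun k _ => ?_
    have : ((k + 1) ! : ℂ) ≠ 0 := Nat.cast_ne_zero.2 (factorial_ne_zero _)
    field_simp
  · simp

end Kernels

theorem sqrt_integral_norm_sq_le {E : Type*} [NormedAddCommGroup E] {f : ℝ → E} {s b C : ℝ}
    (hsb : s < b) (hf : ∀ τ ∈ Ioc s b, ‖f τ‖ ≤ C) :
    √(∫ τ in s..b, ‖f τ‖ ^ 2) ≤ C * √(b - s) := by
  have hC : 0 ≤ C := (norm_nonneg _).trans (hf b ⟨hsb, le_rfl⟩)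
  have hint : ∫ τ in s..b, ‖f τ‖ ^ 2 ≤ C ^ 2 * (b - s) := by
    refine (le_abs_self _).trans ?_
    rw [← Real.norm_eq_abs, ← abs_of_pos (sub_pos.2 hsb)]
    refine intervalIntegral.norm_integral_le_of_norm_le_const fun τ hτ => ?_
    rw [uIoc_of_le hsb.le] at hτ
    rw [norm_pow, norm_norm]
    exact pow_le_pow_left₀ (norm_nonneg _) (hf τ hτ) 2
  calc √(∫ τ in s..b, ‖f τ‖ ^ 2) ≤ √(C ^ 2 * (b - s)) := Real.sqrt_le_sqrt hint
    _ = C * √(b - s) := by rw [Real.sqrt_mul (sq_nonneg C), Real.sqrt_sq hC]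

theorem exists_starPoly_error_le_general (a b : ℝ)
    (lam : ℝ → ℝ) (hlam : ContinuousOn lam (Icc a b))
    (c d : ℝ)
    (hJ : ∀ s τ, a ≤ s → s ≤ τ → τ ≤ b → (∫ σ in s..τ, lam σ) ∈ Icc c d)
    (n : ℕ) :
    ∃ α : ℕ → ℂ, ∀ s ∈ Ico a b,
      Real.sqrt (∫ τ in s..b, ‖
          (thetaResolvent a b lam τ s - thetaStarPoly a b lam α n τ s)‖ ^ 2)
        ≤ En n (Icc c d) * Real.sqrt (b - s) := by
  obtain ⟨q, hq, hqJ⟩ :=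
    exists_polynomial_abs_exp_sub_eval_le_En n (isCompact_Icc (a := c) (b := d))
  refine ⟨fun k => (k ! : ℂ) * q.coeff k, fun s hs => sqrt_integral_norm_sq_le hs.2 fun τ hτ => ?_⟩
  have hsI : s ∈ Icc a b := ⟨hs.1, hs.2.le⟩
  have hτI : τ ∈ Icc a b := ⟨hs.1.trans hτ.1.le, hτ.2⟩
  rw [thetaResolvent_eq hlam hsI hτI, thetaStarPoly_eq hq hlam hsI hτI,
    heaviside_of_nonneg (sub_nonneg.2 hτ.1.le), ← Complex.ofReal_sub, Complex.norm_real,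
    Real.norm_eq_abs, mul_one, mul_one]
  exact hqJ _ (hJ s τ hs.1 hτ.1.le hτ.2)

/-- If `L(τ,s) = ∫_s^τ λ̃` lies in the compact interval `J = [c,d]` for all
`s ≤ τ` in `[a,b]`, then there is a `★`-polynomial `p^★` of degree `≤ n` with
`‖R^★(λ) - p^★(λ)‖_★(s) ≤ E_n(J) √(b-s)` for every `s ∈ [a,b)`. -/
theorem exists_starPoly_error_le (a b : ℝ) (hab : a ≤ b)
    (lam : ℝ → ℝ) (hlam : ContinuousOn lam (Icc a b))
    (c d : ℝ) (hcd : c ≤ d)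
    (hJ : ∀ s τ, a ≤ s → s ≤ τ → τ ≤ b → (∫ σ in s..τ, lam σ) ∈ Icc c d)
    (n : ℕ) :
    ∃ α : ℕ → ℂ, ∀ s ∈ Ico a b,
      Real.sqrt (∫ τ in s..b, ‖
          (thetaResolvent a b lam τ s - thetaStarPoly a b lam α n τ s)‖ ^ 2)
        ≤ En n (Icc c d) * Real.sqrt (b - s) :=
  exists_starPoly_error_le_general a b lam hlam c d hJ n
end
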